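/- arXiv:1904.08202 — 5 statements merged into one kernel-verified Lean document; each statement's English description precedes it below -/
import Mathlib

section
/- Let X ∈ ℂ^{n×n} be Hermitian with W_c(X) ≻ 0, and set Y_c := diag(I_n + X², I_m)^{-1/2} (so Y_c ⪯ I_{n+m}). Then for every perturbation (Δ_A, Δ_B, Δ_C, Δ_D) of the system coefficients such that det W_c(X; A+Δ_A, B+Δ_B, C+Δ_C, D+Δ_D) = 0, one has λ_min(Y_c · W_c(X) · Y_c) ≤ ‖ [[0, Δ_A, Δ_B],[Δ_Aᴴ, 0, Δ_Cᴴ],[Δ_Bᴴ, Δ_C, Δ_D + Δ_Dᴴ]] ‖₂. In other words, λ_min(Y_c W_c(X) Y_c) is a lower bound for the X-passivity radius ρ_M^c(X) := inf{‖Δ_M‖ : det W_c(X; M+Δ_M) = 0}. -/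
open Matrix
open scoped ComplexOrder Matrix.Norms.L2Operator

/-- The square root of a positive semidefinite matrix, as defined in Mathlib (Dec 2024). -/
noncomputable def Matrix.PosSemidef.sqrt {n : Type*} {𝕜 : Type*} [Fintype n] [RCLike 𝕜]
    [DecidableEq n] {A : Matrix n n 𝕜} (hA : A.PosSemidef) : Matrix n n 𝕜 :=
  (hA.1.eigenvectorUnitary : Matrix n n 𝕜) *
    diagonal (fun i => ((Real.sqrt (hA.1.eigenvalues i) : ℝ) : 𝕜)) *
    (star hA.1.eigenvectorUnitary : Matrix n n 𝕜)

/-! With `Z = [[-X, I, 0], [0, 0, I]]` the map `M ↦ W_c(X; M)` satisfies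
`W_c(X; M + Δ_M) = W_c(X; M) + Z Δ Zᴴ`, where `Δ` is the block perturbation on the right-hand side,
and `Z Zᴴ = diag(I + X², I) = Y_c⁻²`. Hence `K = Y_c Z` is a co-isometry and
`Y_c W_c(X; M + Δ_M) Y_c = H + K Δ Kᴴ` with `H = Y_c W_c(X) Y_c`. For a kernel vector `u` of this
singular matrix, `λ_min(H) ‖u‖² ≤ uᴴ H u = -(Kᴴu)ᴴ Δ (Kᴴu) ≤ ‖Δ‖ ‖Kᴴu‖² = ‖Δ‖ ‖u‖²`. -/

namespace Matrix

section Passivity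

variable {n m α : Type*} [CommRing α] [StarRing α]

section

variable [Fintype n]

def passivityMatrix (X A : Matrix n n α) (B : Matrix n m α) (C : Matrix m n α)
    (D : Matrix m m α) : Matrix (n ⊕ m) (n ⊕ m) α :=
  fromBlocks (-(X * A) - Aᴴ * X) (Cᴴ - X * B) (C - Bᴴ * X) (D + Dᴴ)

lemma passivityMatrix_add (X A ΔA : Matrix n n α) (B ΔB : Matrix n m α) (C ΔC : Matrix m n α)
    (D ΔD : Matrix m m α) :
    passivityMatrix X (A + ΔA) (B + ΔB) (C + ΔC) (D + ΔD) =
      passivityMatrix X A B C D + passivityMatrix X ΔA ΔB ΔC ΔD := by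
  simp only [passivityMatrix, fromBlocks_add, conjTranspose_add, Matrix.mul_add,
    Matrix.add_mul]
  congr 1 <;> abel

end

def passivityPerturbation (ΔA : Matrix n n α) (ΔB : Matrix n m α) (ΔC : Matrix m n α)
    (ΔD : Matrix m m α) : Matrix (n ⊕ (n ⊕ m)) (n ⊕ (n ⊕ m)) α :=
  fromBlocks 0 (fromCols ΔA ΔB) (fromRows ΔAᴴ ΔBᴴ) (fromBlocks 0 ΔCᴴ ΔC (ΔD + ΔDᴴ))

variable [DecidableEq n] [DecidableEq m]

def passivityFactor (X : Matrix n n α) : Matrix (n ⊕ m) (n ⊕ (n ⊕ m)) α :=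
  fromBlocks (-X) (fromCols 1 0) 0 (fromCols 0 1)

variable [Fintype n] [Fintype m] {X : Matrix n n α}

lemma passivityFactor_mul_conjTranspose (hX : X.IsHermitian) :
    passivityFactor (m := m) X * (passivityFactor (m := m) X)ᴴ =
      fromBlocks (1 + X * X) 0 0 1 := by
  simp [passivityFactor, fromBlocks_conjTranspose, fromBlocks_multiply,
    conjTranspose_fromCols_eq_fromRows_conjTranspose, fromCols_mul_fromRows, hX.eq, add_comm]

lemma passivityMatrix_eq_conj_passivityFactor (hX : X.IsHermitian) (ΔA : Matrix n n α)
    (ΔB : Matrix n m α) (ΔC : Matrix m n α) (ΔD : Matrix m m α) :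
    passivityMatrix X ΔA ΔB ΔC ΔD = passivityFactor (m := m) X *
      passivityPerturbation ΔA ΔB ΔC ΔD * (passivityFactor (m := m) X)ᴴ := by
  simp [passivityMatrix, passivityFactor, passivityPerturbation, fromBlocks_conjTranspose,
    conjTranspose_fromCols_eq_fromRows_conjTranspose, fromBlocks_multiply,
    fromCols_mul_fromRows, fromCols_mul_fromBlocks, mul_fromCols, hX.eq, Matrix.add_mul,
    Matrix.mul_add, sub_eq_add_neg, add_comm]

end Passivity

open scoped MatrixOrder

variable {ι κ 𝕜 : Type*} [Fintype ι] [Fintype κ] [DecidableEq ι] [DecidableEq κ] [RCLike 𝕜]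

lemma PosSemidef.sqrt_eq_cfcSqrt {A : Matrix ι ι 𝕜} (hA : A.PosSemidef) :
    hA.sqrt = CFC.sqrt A := by
  rw [CFC.sqrt_eq_real_sqrt A hA.nonneg, cfcₙ_eq_cfc, hA.1.cfc_eq]
  rfl

lemma PosSemidef.isHermitian_sqrt {A : Matrix ι ι 𝕜} (hA : A.PosSemidef) :
    hA.sqrt.IsHermitian :=
  hA.sqrt_eq_cfcSqrt ▸ (CFC.sqrt_nonneg A).isSelfAdjoint

lemma PosDef.inv_sqrt_mul_self_mul_inv_sqrt {P : Matrix ι ι 𝕜} (hP : P.PosDef) :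
    (hP.posSemidef.sqrt)⁻¹ * P * (hP.posSemidef.sqrt)⁻¹ = 1 := by
  have hdet : IsUnit (CFC.sqrt P).det := (isUnit_iff_isUnit_det _).mp <|
    CFC.isUnit_sqrt_iff_isStrictlyPositive.mpr (isStrictlyPositive_iff_posDef.mpr hP)
  rw [hP.posSemidef.sqrt_eq_cfcSqrt]
  nth_rw 2 [← CFC.sqrt_mul_sqrt_self P hP.posSemidef.nonneg]
  rw [← Matrix.mul_assoc, nonsing_inv_mul _ hdet, Matrix.one_mul, mul_nonsing_inv _ hdet]

theorem IsHermitian.iInf_eigenvalues_mul_le {A : Matrix ι ι 𝕜} (hA : A.IsHermitian)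
    (u : ι → 𝕜) :
    (⨅ i, hA.eigenvalues i) * RCLike.re (star u ⬝ᵥ u) ≤ RCLike.re (star u ⬝ᵥ (A *ᵥ u)) := by
  have hle : algebraMap ℝ (Matrix ι ι 𝕜) (⨅ i, hA.eigenvalues i) ≤ A := by
    refine algebraMap_le_of_le_spectrum (fun x hx => ?_) hA.isSelfAdjoint
    obtain ⟨i, rfl⟩ := hA.spectrum_real_eq_range_eigenvalues ▸ hx
    exact ciInf_le (Set.finite_range _).bddBelow i
  have h := (RCLike.nonneg_iff.mp ((le_iff.mp hle).dotProduct_mulVec_nonneg u)).1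
  simpa [sub_mulVec, dotProduct_sub, Algebra.algebraMap_eq_smul_one, smul_mulVec,
    dotProduct_smul, RCLike.smul_re] using h

omit [DecidableEq ι] in
lemma re_star_dotProduct_self (u : ι → 𝕜) :
    RCLike.re (star u ⬝ᵥ u) = ‖WithLp.toLp 2 u‖ ^ 2 := by
  rw [← inner_self_eq_norm_sq (𝕜 := 𝕜), EuclideanSpace.inner_toLp_toLp, dotProduct_comm]

lemma abs_re_star_dotProduct_mulVec_le (Δ : Matrix ι ι 𝕜) (u : ι → 𝕜) :
    |RCLike.re (star u ⬝ᵥ (Δ *ᵥ u))| ≤ ‖Δ‖ * RCLike.re (star u ⬝ᵥ u) := by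
  rw [re_star_dotProduct_self, dotProduct_comm, ← EuclideanSpace.inner_toLp_toLp]
  calc _ ≤ ‖inner 𝕜 (WithLp.toLp 2 u) (WithLp.toLp 2 (Δ *ᵥ u))‖ := RCLike.abs_re_le_norm _
    _ ≤ ‖WithLp.toLp 2 u‖ * ‖WithLp.toLp 2 (Δ *ᵥ u)‖ := norm_inner_le_norm _ _
    _ ≤ ‖WithLp.toLp 2 u‖ * (‖Δ‖ * ‖WithLp.toLp 2 u‖) := by
      gcongr; exact Δ.l2_opNorm_mulVec (WithLp.toLp 2 u)
    _ = ‖Δ‖ * ‖WithLp.toLp 2 u‖ ^ 2 := by ring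

theorem IsHermitian.iInf_eigenvalues_le_opNorm_of_det_add_eq_zero {H : Matrix ι ι 𝕜}
    (hH : H.IsHermitian) {K : Matrix ι κ 𝕜} (hK : K * Kᴴ = 1) (Δ : Matrix κ κ 𝕜)
    (hdet : (H + K * Δ * Kᴴ).det = 0) : ⨅ i, hH.eigenvalues i ≤ ‖Δ‖ := by
  obtain ⟨u, hu0, hu⟩ := exists_mulVec_eq_zero_iff.mpr hdet
  set w := Kᴴ *ᵥ u
  have hstar_w : star w = star u ᵥ* K := by rw [star_mulVec, conjTranspose_conjTranspose]
  have hquad : star u ⬝ᵥ (H *ᵥ u) = -(star w ⬝ᵥ (Δ *ᵥ w)) := by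
    rw [add_mulVec, ← mulVec_mulVec, ← mulVec_mulVec, add_eq_zero_iff_eq_neg] at hu
    rw [hu, dotProduct_neg, dotProduct_mulVec, hstar_w]
  have hnorm : star w ⬝ᵥ w = star u ⬝ᵥ u := by
    rw [hstar_w, ← dotProduct_mulVec, mulVec_mulVec, hK, one_mulVec]
  have hpos : 0 < RCLike.re (star u ⬝ᵥ u) :=
    (RCLike.pos_iff.mp (dotProduct_star_self_pos_iff.mpr hu0)).1
  refine le_of_mul_le_mul_right ?_ hpos
  calc _ ≤ RCLike.re (star u ⬝ᵥ (H *ᵥ u)) := hH.iInf_eigenvalues_mul_le u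
    _ ≤ |RCLike.re (star w ⬝ᵥ (Δ *ᵥ w))| := by
      rw [hquad, map_neg]; exact neg_le_abs _
    _ ≤ ‖Δ‖ * RCLike.re (star u ⬝ᵥ u) := hnorm ▸ abs_re_star_dotProduct_mulVec_le Δ w

end Matrix

theorem analytic_center_passivity_radius_lower_bound_continuous_general {n m : ℕ}
    (A : Matrix (Fin n) (Fin n) ℂ) (B : Matrix (Fin n) (Fin m) ℂ)
    (C : Matrix (Fin m) (Fin n) ℂ) (D : Matrix (Fin m) (Fin m) ℂ)
    (X : Matrix (Fin n) (Fin n) ℂ) (hX : X.IsHermitian)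
    (hDg : (fromBlocks (1 + X * X) 0 0 (1 : Matrix (Fin m) (Fin m) ℂ)).PosDef)
    (Yc : Matrix (Fin n ⊕ Fin m) (Fin n ⊕ Fin m) ℂ)
    (hYc : Yc = (hDg.posSemidef.sqrt)⁻¹)
    (ΔA : Matrix (Fin n) (Fin n) ℂ) (ΔB : Matrix (Fin n) (Fin m) ℂ)
    (ΔC : Matrix (Fin m) (Fin n) ℂ) (ΔD : Matrix (Fin m) (Fin m) ℂ)
    (hdet : (fromBlocks (-(X * (A + ΔA)) - (A + ΔA)ᴴ * X) ((C + ΔC)ᴴ - X * (B + ΔB))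
        ((C + ΔC) - (B + ΔB)ᴴ * X) ((D + ΔD) + (D + ΔD)ᴴ)).det = 0)
    (hH : (Yc * (fromBlocks (-(X * A) - Aᴴ * X) (Cᴴ - X * B) (C - Bᴴ * X) (D + Dᴴ)) *
        Yc).IsHermitian) :
    (⨅ i, hH.eigenvalues i) ≤
      ‖fromBlocks (0 : Matrix (Fin n) (Fin n) ℂ) (fromCols ΔA ΔB)
        (fromRows ΔAᴴ ΔBᴴ) (fromBlocks 0 ΔCᴴ ΔC (ΔD + ΔDᴴ))‖ := by
  set Z := passivityFactor (m := Fin m) X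
  set Δ := passivityPerturbation ΔA ΔB ΔC ΔD
  have hYc_herm : Ycᴴ = Yc := hYc ▸ hDg.posSemidef.isHermitian_sqrt.inv
  have hperturbed : passivityMatrix X (A + ΔA) (B + ΔB) (C + ΔC) (D + ΔD) =
      passivityMatrix X A B C D + Z * Δ * Zᴴ := by
    rw [passivityMatrix_add, passivityMatrix_eq_conj_passivityFactor hX ΔA]
  refine hH.iInf_eigenvalues_le_opNorm_of_det_add_eq_zero (K := Yc * Z) ?_ Δ ?_
  · rw [conjTranspose_mul, hYc_herm, Matrix.mul_assoc, ← Matrix.mul_assoc Z,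
      passivityFactor_mul_conjTranspose hX, ← Matrix.mul_assoc, hYc]
    exact hDg.inv_sqrt_mul_self_mul_inv_sqrt
  · have hcongr : Yc * passivityMatrix X A B C D * Yc + Yc * Z * Δ * (Yc * Z)ᴴ =
        Yc * passivityMatrix X (A + ΔA) (B + ΔB) (C + ΔC) (D + ΔD) * Yc := by
      rw [hperturbed, conjTranspose_mul, hYc_herm]
      simp only [Matrix.mul_add, Matrix.add_mul, Matrix.mul_assoc]
    change (Yc * passivityMatrix X A B C D * Yc + _).det = 0
    rw [hcongr, det_mul, det_mul, passivityMatrix, hdet, mul_zero, zero_mul]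

/-- lower bound for the continuous-time X-passivity radius.
If `W_c(X) ≻ 0` and `Y_c := diag(I + X², I)^{-1/2}`, then any perturbation
`(ΔA, ΔB, ΔC, ΔD)` making `det W_c(X; M + Δ_M) = 0` satisfies
`λ_min(Y_c W_c(X) Y_c) ≤ ‖[[0, ΔA, ΔB],[ΔAᴴ, 0, ΔCᴴ],[ΔBᴴ, ΔC, ΔD + ΔDᴴ]]‖₂`. -/
theorem analytic_center_passivity_radius_lower_bound_continuous {n m : ℕ}
    (A : Matrix (Fin n) (Fin n) ℂ) (B : Matrix (Fin n) (Fin m) ℂ)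
    (C : Matrix (Fin m) (Fin n) ℂ) (D : Matrix (Fin m) (Fin m) ℂ)
    (X : Matrix (Fin n) (Fin n) ℂ) (hX : X.IsHermitian)
    (hW : (fromBlocks (-(X * A) - Aᴴ * X) (Cᴴ - X * B) (C - Bᴴ * X) (D + Dᴴ)).PosDef)
    (hDg : (fromBlocks (1 + X * X) 0 0 (1 : Matrix (Fin m) (Fin m) ℂ)).PosDef)
    (Yc : Matrix (Fin n ⊕ Fin m) (Fin n ⊕ Fin m) ℂ)
    (hYc : Yc = (hDg.posSemidef.sqrt)⁻¹)
    (ΔA : Matrix (Fin n) (Fin n) ℂ) (ΔB : Matrix (Fin n) (Fin m) ℂ)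
    (ΔC : Matrix (Fin m) (Fin n) ℂ) (ΔD : Matrix (Fin m) (Fin m) ℂ)
    (hdet : (fromBlocks (-(X * (A + ΔA)) - (A + ΔA)ᴴ * X) ((C + ΔC)ᴴ - X * (B + ΔB))
        ((C + ΔC) - (B + ΔB)ᴴ * X) ((D + ΔD) + (D + ΔD)ᴴ)).det = 0)
    (hH : (Yc * (fromBlocks (-(X * A) - Aᴴ * X) (Cᴴ - X * B) (C - Bᴴ * X) (D + Dᴴ)) *
        Yc).IsHermitian) :
    (⨅ i, hH.eigenvalues i) ≤
      ‖fromBlocks (0 : Matrix (Fin n) (Fin n) ℂ) (fromCols ΔA ΔB)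
        (fromRows ΔAᴴ ΔBᴴ) (fromBlocks 0 ΔCᴴ ΔC (ΔD + ΔDᴴ))‖ :=
  analytic_center_passivity_radius_lower_bound_continuous_general A B C D X hX hDg Yc hYc ΔA ΔB ΔC
    ΔD hdet hH
end

section
/- Let A ∈ ℂ^{n×n}, B ∈ ℂ^{n×m}, C ∈ ℂ^{m×n}, D ∈ ℂ^{m×m} with R := D + Dᴴ ≻ 0, and let X ∈ ℂ^{n×n} be Hermitian with P_c := Ricc_c(X) = −XA − AᴴX − (Cᴴ − XB)R⁻¹(C − BᴴX) ≻ 0. Set F_c := R⁻¹(C − BᴴX) and A_{F_c} := A − BF_c. Then the following are equivalent: (i) Re tr( W_c(X)⁻¹ · [[AᴴΔ + ΔA, ΔB],[BᴴΔ, 0]] ) = 0 for every Hermitian Δ ∈ ℂ^{n×n} (i.e., X is a critical point of the barrier function b(X) = −ln det W_c(X)); (ii) P_c⁻¹ A_{F_c}ᴴ + A_{F_c} P_c⁻¹ = 0. -/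
open Matrix
open scoped ComplexOrder

/-!
With `S := Cᴴ - XB`, the top-left block of `W_c(X)` is `P_c + S R⁻¹ Sᴴ`, so `P_c` is the Schur
complement of `R` in `W_c(X)` and the Schur inverse formula gives `W_c(X)⁻¹` blockwise in terms of
`P_c⁻¹`, `R⁻¹` and `F_c = R⁻¹ Sᴴ`. Multiplying out and cycling traces, the gradient pairing becomes
`Re tr(M Δ)` with the Hermitian matrix `M := P_c⁻¹ A_{F_c}ᴴ + A_{F_c} P_c⁻¹`; choosing `Δ = M`
gives `tr(M²) = ‖M‖² = 0`.
-/

namespace Matrix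

variable {m n α : Type*} [Fintype m] [Fintype n]

theorem trace_fromBlocks [AddCommMonoid α] (A : Matrix n n α) (B : Matrix n m α)
    (C : Matrix m n α) (D : Matrix m m α) :
    (fromBlocks A B C D).trace = A.trace + D.trace := by
  simp [trace, Fintype.sum_sum_type]

/-- The second factor is `-dW_c(X)[Δ]`, the first has the block pattern of `W_c(X)⁻¹` with
`Q = P_c⁻¹`. -/
theorem trace_fromBlocks_mul_lyapunov [CommRing α] [StarRing α] (Q : Matrix n n α)
    (F : Matrix m n α) (E : Matrix m m α) (A Δ : Matrix n n α) (B : Matrix n m α) :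
    (fromBlocks Q (-(Q * Fᴴ)) (-(F * Q)) E *
        fromBlocks (Aᴴ * Δ + Δ * A) (Δ * B) (Bᴴ * Δ) 0).trace =
      ((Q * (A - B * F)ᴴ + (A - B * F) * Q) * Δ).trace := by
  rw [fromBlocks_multiply, trace_fromBlocks]
  simp only [conjTranspose_sub, conjTranspose_mul, Matrix.mul_zero, add_zero, Matrix.mul_add,
    Matrix.add_mul, Matrix.mul_sub, Matrix.sub_mul, Matrix.neg_mul, trace_add, trace_sub,
    trace_neg, Matrix.mul_assoc]
  rw [trace_mul_comm A, trace_mul_comm B]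
  simp only [Matrix.mul_assoc]
  abel

variable [DecidableEq m] [DecidableEq n]

theorem inv_fromBlocks₂₂_eq [CommRing α] (A : Matrix n n α) (B : Matrix n m α)
    (C : Matrix m n α) (D : Matrix m m α) (hD : IsUnit D.det)
    (hS : IsUnit (A - B * D⁻¹ * C).det) :
    (fromBlocks A B C D)⁻¹ =
      fromBlocks (A - B * D⁻¹ * C)⁻¹ (-((A - B * D⁻¹ * C)⁻¹ * B * D⁻¹))
        (-(D⁻¹ * C * (A - B * D⁻¹ * C)⁻¹))
        (D⁻¹ + D⁻¹ * C * (A - B * D⁻¹ * C)⁻¹ * B * D⁻¹) := by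
  let := D.invertibleOfIsUnitDet hD
  let := (A - B * ⅟D * C).invertibleOfIsUnitDet (by rwa [invOf_eq_nonsing_inv])
  let := fromBlocks₂₂Invertible A B C D
  simpa only [invOf_eq_nonsing_inv] using invOf_fromBlocks₂₂_eq A B C D

theorem IsHermitian.forall_re_trace_mul_eq_zero_iff {𝕜 : Type*} [RCLike 𝕜] {M : Matrix n n 𝕜}
    (hM : M.IsHermitian) :
    (∀ Δ : Matrix n n 𝕜, Δ.IsHermitian → RCLike.re (M * Δ).trace = 0) ↔ M = 0 := by
  refine ⟨fun h => ?_, fun h Δ _ => by simp [h]⟩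
  have hnonneg : 0 ≤ (Mᴴ * M).trace := (posSemidef_conjTranspose_mul_self M).trace_nonneg
  have hre : RCLike.re (Mᴴ * M).trace = 0 := by rw [hM.eq]; exact h M hM
  rw [← trace_conjTranspose_mul_self_eq_zero_iff]
  obtain ⟨-, him⟩ := RCLike.nonneg_iff.mp hnonneg
  exact RCLike.ext (by simpa using hre) (by simpa using him)

end Matrix

theorem critical_point_iff_closed_loop_equation_continuous_general {n m : ℕ}
    (A : Matrix (Fin n) (Fin n) ℂ) (B : Matrix (Fin n) (Fin m) ℂ)
    (C : Matrix (Fin m) (Fin n) ℂ)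
    (X : Matrix (Fin n) (Fin n) ℂ) (hX : X.IsHermitian)
    (R : Matrix (Fin m) (Fin m) ℂ) (hRpd : R.PosDef)
    (F : Matrix (Fin m) (Fin n) ℂ) (hF : F = R⁻¹ * (C - Bᴴ * X))
    (P : Matrix (Fin n) (Fin n) ℂ)
    (hP : P = -(X * A) - Aᴴ * X - (Cᴴ - X * B) * R⁻¹ * (C - Bᴴ * X))
    (hPpd : P.PosDef)
    (AF : Matrix (Fin n) (Fin n) ℂ) (hAF : AF = A - B * F) :
    (∀ Δ : Matrix (Fin n) (Fin n) ℂ, Δ.IsHermitian →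
        ((fromBlocks (-(X * A) - Aᴴ * X) (Cᴴ - X * B) (C - Bᴴ * X) R)⁻¹ *
          fromBlocks (Aᴴ * Δ + Δ * A) (Δ * B) (Bᴴ * Δ) 0).trace.re = 0)
      ↔ P⁻¹ * AFᴴ + AF * P⁻¹ = 0 := by
  set S := Cᴴ - X * B
  have hSH : Sᴴ = C - Bᴴ * X := by simp [S, hX.eq]
  have hFH : Fᴴ = S * R⁻¹ := by
    rw [hF, conjTranspose_mul, hRpd.isHermitian.inv.eq, ← hSH, conjTranspose_conjTranspose]
  have hTL : -(X * A) - Aᴴ * X = P + S * R⁻¹ * Sᴴ := by rw [hP, hSH]; abel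
  have hSchur : P + S * R⁻¹ * Sᴴ - S * R⁻¹ * Sᴴ = P := add_sub_cancel_right _ _
  have hWinv : (fromBlocks (-(X * A) - Aᴴ * X) S (C - Bᴴ * X) R)⁻¹ =
      fromBlocks P⁻¹ (-(P⁻¹ * Fᴴ)) (-(F * P⁻¹)) (R⁻¹ + F * P⁻¹ * Fᴴ) := by
    rw [hTL, ← hSH, inv_fromBlocks₂₂_eq _ _ _ _ ((isUnit_iff_isUnit_det R).mp hRpd.isUnit),
      hSchur, hFH, hF, ← hSH]
    · simp only [Matrix.mul_assoc]
    · rw [hSchur]; exact (isUnit_iff_isUnit_det P).mp hPpd.isUnit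
  have hM : (P⁻¹ * AFᴴ + AF * P⁻¹).IsHermitian := by
    simp [IsHermitian, hPpd.isHermitian.inv.eq, add_comm]
  simp only [hWinv, trace_fromBlocks_mul_lyapunov, ← hAF]
  exact hM.forall_re_trace_mul_eq_zero_iff

/-- characterization of critical points of the continuous-time
barrier function `b(X) = -ln det W_c(X)`: the gradient condition
`Re tr(W_c(X)⁻¹ · [[AᴴΔ + ΔA, ΔB],[BᴴΔ, 0]]) = 0` for all Hermitian `Δ`
is equivalent to `P_c⁻¹ A_{F_c}ᴴ + A_{F_c} P_c⁻¹ = 0`. -/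
theorem critical_point_iff_closed_loop_equation_continuous {n m : ℕ}
    (A : Matrix (Fin n) (Fin n) ℂ) (B : Matrix (Fin n) (Fin m) ℂ)
    (C : Matrix (Fin m) (Fin n) ℂ) (D : Matrix (Fin m) (Fin m) ℂ)
    (X : Matrix (Fin n) (Fin n) ℂ) (hX : X.IsHermitian)
    (R : Matrix (Fin m) (Fin m) ℂ) (hR : R = D + Dᴴ) (hRpd : R.PosDef)
    (F : Matrix (Fin m) (Fin n) ℂ) (hF : F = R⁻¹ * (C - Bᴴ * X))
    (P : Matrix (Fin n) (Fin n) ℂ)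
    (hP : P = -(X * A) - Aᴴ * X - (Cᴴ - X * B) * R⁻¹ * (C - Bᴴ * X))
    (hPpd : P.PosDef)
    (AF : Matrix (Fin n) (Fin n) ℂ) (hAF : AF = A - B * F) :
    (∀ Δ : Matrix (Fin n) (Fin n) ℂ, Δ.IsHermitian →
        ((fromBlocks (-(X * A) - Aᴴ * X) (Cᴴ - X * B) (C - Bᴴ * X) R)⁻¹ *
          fromBlocks (Aᴴ * Δ + Δ * A) (Δ * B) (Bᴴ * Δ) 0).trace.re = 0)
      ↔ P⁻¹ * AFᴴ + AF * P⁻¹ = 0 :=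
  critical_point_iff_closed_loop_equation_continuous_general A B C X hX R hRpd F hF P hP hPpd AF hAF
end

section
/- Let A_F ∈ ℂ^{n×n}, B ∈ ℂ^{n×m}, let P ∈ ℂ^{n×n} be Hermitian positive definite and S ∈ ℂ^{m×m} Hermitian positive definite, and assume the pair (A_F, B) is controllable in the Hautus sense: for every λ ∈ ℂ and every nonzero v ∈ ℂⁿ with vᴴA_F = λvᴴ one has vᴴB ≠ 0. If the Stein (discrete Lyapunov) equation A_F P A_Fᴴ − P + B S Bᴴ = 0 holds, then every eigenvalue of A_F has modulus strictly less than 1. -/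
/-!
If `vᴴ A = μ vᴴ` with `v ≠ 0`, evaluating the quadratic form of the Stein equation at `v`
gives `(|μ|² - 1) · vᴴ P v + (Bᴴ v)ᴴ S (Bᴴ v) = 0`. The first form is positive since `P ≻ 0`,
the second since `S ≻ 0` and `Bᴴ v ≠ 0` by the Hautus test, so `|μ|² < 1`.
-/

open Matrix
open scoped ComplexOrder

namespace Matrix

variable {n : Type*} [Fintype n]

theorem exists_vecMul_eq_smul_of_mem_spectrum {K : Type*} [Field K] [DecidableEq n]
    {A : Matrix n n K} {μ : K} (hμ : μ ∈ spectrum K A) :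
    ∃ w ≠ 0, w ᵥ* A = μ • w := by
  rw [spectrum.mem_iff, isUnit_iff_isUnit_det, isUnit_iff_ne_zero, not_not,
    ← exists_vecMul_eq_zero_iff] at hμ
  obtain ⟨w, hw, hwA⟩ := hμ
  refine ⟨w, hw, ?_⟩
  rwa [vecMul_sub, Algebra.algebraMap_eq_smul_one, vecMul_smul, vecMul_one, sub_eq_zero,
    eq_comm] at hwA

theorem star_dotProduct_mul_mul_conjTranspose_mulVec {m R : Type*} [Fintype m] [CommRing R]
    [StarRing R] (M : Matrix n m R) (Q : Matrix m m R) (v : n → R) :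
    star v ⬝ᵥ (M * Q * Mᴴ) *ᵥ v = star (Mᴴ *ᵥ v) ⬝ᵥ Q *ᵥ (Mᴴ *ᵥ v) := by
  rw [← mulVec_mulVec, ← mulVec_mulVec, dotProduct_mulVec, star_mulVec,
    conjTranspose_conjTranspose]

theorem conjTranspose_mulVec_eq_star_smul {R : Type*} [CommRing R] [StarRing R]
    {A : Matrix n n R} {μ : R} {v : n → R} (hv : star v ᵥ* A = μ • star v) :
    Aᴴ *ᵥ v = star μ • v := by
  have := congrArg star hv
  rwa [star_vecMul, star_smul, star_star] at this

theorem norm_lt_one_of_stein_of_left_eigenvector {𝕜 m : Type*} [RCLike 𝕜] [Fintype m]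
    {A P : Matrix n n 𝕜} {B : Matrix n m 𝕜} {S : Matrix m m 𝕜}
    (hP : P.PosDef) (hS : S.PosDef)
    (hstein : A * P * Aᴴ - P + B * S * Bᴴ = 0) {μ : 𝕜} {v : n → 𝕜} (hv0 : v ≠ 0)
    (hv : star v ᵥ* A = μ • star v) (hvB : star v ᵥ* B ≠ 0) : ‖μ‖ < 1 := by
  have hu : Bᴴ *ᵥ v ≠ 0 := fun h ↦ hvB <| by
    rw [← conjTranspose_conjTranspose B, ← star_mulVec, h, star_zero]
  obtain ⟨c, hc, hc'⟩ := RCLike.pos_iff_exists_ofReal.1 (hP.dotProduct_mulVec_pos hv0)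
  obtain ⟨d, hd, hd'⟩ := RCLike.pos_iff_exists_ofReal.1 (hS.dotProduct_mulVec_pos hu)
  have hquad : star v ⬝ᵥ (A * P * Aᴴ - P + B * S * Bᴴ) *ᵥ v
      = ((‖μ‖ ^ 2 * c - c + d : ℝ) : 𝕜) := by
    rw [add_mulVec, sub_mulVec, dotProduct_add, dotProduct_sub,
      star_dotProduct_mul_mul_conjTranspose_mulVec,
      star_dotProduct_mul_mul_conjTranspose_mulVec B, conjTranspose_mulVec_eq_star_smul hv,
      star_smul, mulVec_smul, dotProduct_smul, smul_dotProduct, star_star, ← hc', ← hd']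
    push_cast
    rw [← RCLike.mul_conj]
    simp only [smul_eq_mul, RCLike.star_def]
    ring
  have hreal : ‖μ‖ ^ 2 * c - c + d = 0 := by
    rw [hstein, zero_mulVec, dotProduct_zero] at hquad
    exact_mod_cast hquad.symm
  have hsq : ‖μ‖ ^ 2 < 1 := by nlinarith
  exact (sq_lt_one_iff₀ (norm_nonneg μ)).1 hsq

end Matrix

/-- if `(A_F, B)` is controllable (Hautus test) and the Stein
equation `A_F P A_Fᴴ − P + B S Bᴴ = 0` holds with `P ≻ 0` and `S ≻ 0`, then
every eigenvalue of `A_F` lies strictly inside the unit circle. -/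
theorem stein_equation_eigenvalues_inside_unit_circle {n m : ℕ}
    (AF : Matrix (Fin n) (Fin n) ℂ) (B : Matrix (Fin n) (Fin m) ℂ)
    (P : Matrix (Fin n) (Fin n) ℂ) (S : Matrix (Fin m) (Fin m) ℂ)
    (hP : P.PosDef) (hS : S.PosDef)
    (hautus : ∀ (μ : ℂ) (v : Fin n → ℂ), v ≠ 0 →
        Matrix.vecMul (star v) AF = μ • star v → Matrix.vecMul (star v) B ≠ 0)
    (hstein : AF * P * AFᴴ - P + B * S * Bᴴ = 0) :
    ∀ μ ∈ spectrum ℂ AF, ‖μ‖ < 1 := by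
  intro μ hμ
  obtain ⟨w, hw0, hw⟩ := exists_vecMul_eq_smul_of_mem_spectrum hμ
  have hv0 : star w ≠ 0 := star_ne_zero.2 hw0
  have hv : star (star w) ᵥ* AF = μ • star (star w) := by rwa [star_star]
  exact norm_lt_one_of_stein_of_left_eigenvector hP hS hstein hv0 hv (hautus μ _ hv0 hv)
end

section
/- Let A ∈ ℂ^{n×n}, B ∈ ℂ^{n×m}, C ∈ ℂ^{m×n}, R ∈ ℂ^{m×m} Hermitian, and X ∈ ℂ^{n×n} Hermitian. Then the determinant of the block matrix [[0, I_n, (X/2)(A − I_n), (X/2)B],[I_n, 0, A + I_n, B],[(Aᴴ − I_n)(X/2), Aᴴ + I_n, 0, Cᴴ],[Bᴴ(X/2), Bᴴ, C, R]] equals (−1)ⁿ · det W_d(X), where W_d(X) := [[X − AᴴXA, Cᴴ − AᴴXB],[C − BᴴXA, R − BᴴXB]]; indeed W_d(X) is the Schur complement of the leading 2n×2n block of that matrix. -/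
/-!
The leading `2n × 2n` block of the embedding is the swap matrix `J = [[0, I], [I, 0]]`, an
involution of determinant `(-1)ⁿ`, so expanding around it gives `(-1)ⁿ` times the determinant of
the Schur complement `D - C J B`. In `C J B` the cross terms cancel,
`(Aᴴ + I) X (A - I) + (Aᴴ - I) X (A + I) = 2 (Aᴴ X A - X)`, and what is left is exactly `W_d(X)`.
-/

open Matrix

namespace Matrix

theorem fromBlocks_sub {l m n o α : Type*} [Sub α] (A A' : Matrix n l α) (B B' : Matrix n m α)
    (C C' : Matrix o l α) (D D' : Matrix o m α) :
    fromBlocks A B C D - fromBlocks A' B' C' D' =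
      fromBlocks (A - A') (B - B') (C - C') (D - D') := by
  ext (i | i) (j | j) <;> rfl

section SwapBlocks

variable {l α : Type*} [Fintype l] [DecidableEq l] [CommRing α]

theorem fromBlocks_zero_one_one_zero_mul_self :
    (fromBlocks 0 1 1 0 : Matrix (l ⊕ l) (l ⊕ l) α) * fromBlocks 0 1 1 0 = 1 := by
  simp [fromBlocks_multiply, ← fromBlocks_one]

theorem det_fromBlocks_zero_one_one_zero :
    (fromBlocks 0 1 1 0 : Matrix (l ⊕ l) (l ⊕ l) α).det = (-1) ^ Fintype.card l := by
  have hshear : (fromBlocks 0 1 1 0 : Matrix (l ⊕ l) (l ⊕ l) α) * fromBlocks 1 0 1 1 =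
      fromBlocks 1 1 1 0 := by
    simp [fromBlocks_multiply]
  have hdet := congrArg det hshear
  rw [det_mul, det_fromBlocks_one₁₁, det_fromBlocks_one₁₁] at hdet
  simpa [det_neg] using hdet

theorem det_fromBlocks_fromBlocks_zero_one_one_zero {n : Type*} [Fintype n] [DecidableEq n]
    (B : Matrix (l ⊕ l) n α) (C : Matrix n (l ⊕ l) α) (D : Matrix n n α) :
    (fromBlocks (fromBlocks 0 1 1 0) B C D).det =
      (-1) ^ Fintype.card l * (D - C * (fromBlocks 0 1 1 0 : Matrix (l ⊕ l) (l ⊕ l) α) * B).det := by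
  let _ : Invertible (fromBlocks 0 1 1 0 : Matrix (l ⊕ l) (l ⊕ l) α) :=
    invertibleOfLeftInverse _ _ fromBlocks_zero_one_one_zero_mul_self
  rw [det_fromBlocks₁₁, invOf_eq_right_inv fromBlocks_zero_one_one_zero_mul_self,
    det_fromBlocks_zero_one_one_zero]

end SwapBlocks

end Matrix

section Embedding

variable {K n m : Type*} [Field K] [Star K] [Fintype n] [DecidableEq n]

def Wd (A : Matrix n n K) (B : Matrix n m K) (C : Matrix m n K) (R : Matrix m m K)
    (X : Matrix n n K) : Matrix (n ⊕ m) (n ⊕ m) K :=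
  fromBlocks (X - Aᴴ * X * A) (Cᴴ - Aᴴ * X * B) (C - Bᴴ * X * A) (R - Bᴴ * X * B)

theorem embedding_lower_mul_swap_mul_upper [CharZero K]
    (A : Matrix n n K) (B : Matrix n m K) (X : Matrix n n K) :
    fromBlocks ((Aᴴ - 1) * ((2 : K)⁻¹ • X)) (Aᴴ + 1) (Bᴴ * ((2 : K)⁻¹ • X)) Bᴴ *
        (fromBlocks 0 1 1 0 : Matrix (n ⊕ n) (n ⊕ n) K) *
        fromBlocks (((2 : K)⁻¹ • X) * (A - 1)) (((2 : K)⁻¹ • X) * B) (A + 1) B =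
      fromBlocks (Aᴴ * X * A - X) (Aᴴ * X * B) (Bᴴ * X * A) (Bᴴ * X * B) := by
  simp only [fromBlocks_multiply, Matrix.mul_zero, Matrix.mul_one, zero_add, add_zero]
  congr 1 <;>
  · simp only [Matrix.add_mul, Matrix.mul_add, Matrix.sub_mul, Matrix.mul_sub,
      Matrix.mul_smul, Matrix.smul_mul, Matrix.mul_one, Matrix.one_mul, Matrix.mul_assoc]
    module

theorem embedding_schurComplement_eq_Wd [CharZero K]
    (A : Matrix n n K) (B : Matrix n m K) (C : Matrix m n K) (R : Matrix m m K)
    (X : Matrix n n K) :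
    fromBlocks 0 Cᴴ C R -
        fromBlocks ((Aᴴ - 1) * ((2 : K)⁻¹ • X)) (Aᴴ + 1) (Bᴴ * ((2 : K)⁻¹ • X)) Bᴴ *
          (fromBlocks 0 1 1 0 : Matrix (n ⊕ n) (n ⊕ n) K) *
          fromBlocks (((2 : K)⁻¹ • X) * (A - 1)) (((2 : K)⁻¹ • X) * B) (A + 1) B =
      Wd A B C R X := by
  rw [embedding_lower_mul_swap_mul_upper, fromBlocks_sub, zero_sub, neg_sub, Wd]

end Embedding

theorem det_embedding_eq_det_Wd_general {n m : ℕ}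
    (A : Matrix (Fin n) (Fin n) ℂ) (B : Matrix (Fin n) (Fin m) ℂ)
    (C : Matrix (Fin m) (Fin n) ℂ)
    (R : Matrix (Fin m) (Fin m) ℂ)
    (X : Matrix (Fin n) (Fin n) ℂ) :
    (fromBlocks
        (fromBlocks (0 : Matrix (Fin n) (Fin n) ℂ) 1 1 0)
        (fromBlocks (((2 : ℂ)⁻¹ • X) * (A - 1)) (((2 : ℂ)⁻¹ • X) * B) (A + 1) B)
        (fromBlocks ((Aᴴ - 1) * ((2 : ℂ)⁻¹ • X)) (Aᴴ + 1) (Bᴴ * ((2 : ℂ)⁻¹ • X)) Bᴴ)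
        (fromBlocks 0 Cᴴ C R)).det =
      (-1 : ℂ) ^ n *
        (fromBlocks (X - Aᴴ * X * A) (Cᴴ - Aᴴ * X * B)
          (C - Bᴴ * X * A) (R - Bᴴ * X * B)).det := by
  rw [det_fromBlocks_fromBlocks_zero_one_one_zero, embedding_schurComplement_eq_Wd,
    Fintype.card_fin, Wd]

/-- the determinant of the embedded 4×4 block matrix
`[[0, I, (X/2)(A−I), (X/2)B],[I, 0, A+I, B],[(Aᴴ−I)(X/2), Aᴴ+I, 0, Cᴴ],[Bᴴ(X/2), Bᴴ, C, R]]`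
equals `(−1)ⁿ · det W_d(X)`. -/
theorem det_embedding_eq_det_Wd {n m : ℕ}
    (A : Matrix (Fin n) (Fin n) ℂ) (B : Matrix (Fin n) (Fin m) ℂ)
    (C : Matrix (Fin m) (Fin n) ℂ)
    (R : Matrix (Fin m) (Fin m) ℂ) (hR : R.IsHermitian)
    (X : Matrix (Fin n) (Fin n) ℂ) (hX : X.IsHermitian) :
    (fromBlocks
        (fromBlocks (0 : Matrix (Fin n) (Fin n) ℂ) 1 1 0)
        (fromBlocks (((2 : ℂ)⁻¹ • X) * (A - 1)) (((2 : ℂ)⁻¹ • X) * B) (A + 1) B)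
        (fromBlocks ((Aᴴ - 1) * ((2 : ℂ)⁻¹ • X)) (Aᴴ + 1) (Bᴴ * ((2 : ℂ)⁻¹ • X)) Bᴴ)
        (fromBlocks 0 Cᴴ C R)).det =
      (-1 : ℂ) ^ n *
        (fromBlocks (X - Aᴴ * X * A) (Cᴴ - Aᴴ * X * B)
          (C - Bᴴ * X * A) (R - Bᴴ * X * B)).det :=
  det_embedding_eq_det_Wd_general A B C R X
end

section
/- Let A_c ∈ ℂ^{n×n} with I − A_c invertible, B_c ∈ ℂ^{n×m}, Q_c ∈ ℂ^{n×n} Hermitian, C_c ∈ ℂ^{m×n}, R_c ∈ ℂ^{m×m} Hermitian, and X ∈ ℂ^{n×n} Hermitian. Define A_d := (A_c − I)⁻¹(I + A_c), B_d := √2·(A_c − I)⁻¹B_c, T_c := [[√2(I − A_c)⁻¹, (I − A_c)⁻¹B_c],[0, I_m]], and [[Q_d, C_dᴴ],[C_d, R_d]] := T_cᴴ [[Q_c, C_cᴴ],[C_c, R_c]] T_c. Then T_cᴴ · ( [[Q_c, C_cᴴ],[C_c, R_c]] − [[A_cᴴ, I_n],[B_cᴴ, 0]]·[[0, X],[X,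 0]]·[[A_c, B_c],[I_n, 0]] ) · T_c = [[Q_d, C_dᴴ],[C_d, R_d]] − [[A_dᴴ, I_n],[B_dᴴ, 0]]·[[X, 0],[0, −X]]·[[A_d, B_d],[I_n, 0]]. In particular, the continuous-time LMI matrix with data (Q_c, C_c, R_c) evaluated at X is congruent, via T_c, to the discrete-time LMI matrix with the transformed data (A_d, B_d, Q_d, C_d, R_d) evaluated at the same X. -/
/-! With `S = (1 - A)⁻¹` one has `A S = S A = S - 1`. Hence, for `c = √2`,
`N := [[A, B], [1, 0]] T_c = [[c (S - 1), S B], [c S, S B]]`, and the Hadamard block matrix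
`H = [[1, 1], [1, -1]]` satisfies `H N = -c [[A_d, B_d], [1, 0]]` as well as
`Hᴴ diag(X, -X) H = 2 [[0, X], [X, 0]]`. So the quadratic terms of the two LMI matrices agree
once `T_c` is moved inside the continuous-time one, and the theorem follows because `c² = 2`. -/

namespace Matrix

variable {𝕜 : Type*} {n m : Type*}

theorem conjTranspose_mul_sub_conjTranspose_mul_mul [CommRing 𝕜] [StarRing 𝕜] {p : Type*}
    [Fintype n] [Fintype p] (T K : Matrix n n 𝕜) (R : Matrix p n 𝕜) (J : Matrix p p 𝕜) :
    Tᴴ * (K - Rᴴ * J * R) * T = Tᴴ * K * T - (R * T)ᴴ * J * (R * T) := by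
  simp only [conjTranspose_mul, Matrix.mul_sub, Matrix.sub_mul, Matrix.mul_assoc]

theorem mul_inv_one_sub [CommRing 𝕜] [Fintype n] [DecidableEq n] {A : Matrix n n 𝕜}
    (hA : IsUnit (1 - A)) : A * (1 - A)⁻¹ = (1 - A)⁻¹ - 1 := by
  have h := mul_nonsing_inv (1 - A) ((isUnit_iff_isUnit_det _).mp hA)
  set S := (1 - A)⁻¹
  rw [Matrix.sub_mul, Matrix.one_mul] at h
  rw [← h, sub_sub_cancel]

theorem inv_one_sub_mul [CommRing 𝕜] [Fintype n] [DecidableEq n] {A : Matrix n n 𝕜}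
    (hA : IsUnit (1 - A)) : (1 - A)⁻¹ * A = (1 - A)⁻¹ - 1 := by
  have h := nonsing_inv_mul (1 - A) ((isUnit_iff_isUnit_det _).mp hA)
  set S := (1 - A)⁻¹
  rw [Matrix.mul_sub, Matrix.mul_one] at h
  rw [← h, sub_sub_cancel]

theorem inv_sub_one [CommRing 𝕜] [Fintype n] [DecidableEq n] {A : Matrix n n 𝕜}
    (hA : IsUnit (1 - A)) : (A - 1)⁻¹ = -(1 - A)⁻¹ := by
  apply inv_eq_right_inv
  rw [← neg_sub, Matrix.neg_mul, Matrix.mul_neg, neg_neg,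
    mul_nonsing_inv _ ((isUnit_iff_isUnit_det _).mp hA)]

theorem hadamard_conjTranspose_mul_fromBlocks_diag_mul [CommRing 𝕜] [StarRing 𝕜] [Fintype n]
    [DecidableEq n] (X : Matrix n n 𝕜) :
    (fromBlocks 1 1 1 (-1) : Matrix (n ⊕ n) (n ⊕ n) 𝕜)ᴴ * fromBlocks X 0 0 (-X) *
        fromBlocks 1 1 1 (-1) = (2 : 𝕜) • fromBlocks 0 X X 0 := by
  simp [fromBlocks_conjTranspose, fromBlocks_multiply, two_smul, fromBlocks_add]

theorem hadamard_mul_cayley [CommRing 𝕜] [Fintype n] [DecidableEq n] [Fintype m]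
    [DecidableEq m] {A : Matrix n n 𝕜} (hA : IsUnit (1 - A)) (B : Matrix n m 𝕜) {c : 𝕜}
    (hc : c * c = 2) :
    (fromBlocks 1 1 1 (-1) : Matrix (n ⊕ n) (n ⊕ n) 𝕜) *
        (fromBlocks A B (1 : Matrix n n 𝕜) 0 *
          (fromBlocks (c • (1 - A)⁻¹) ((1 - A)⁻¹ * B) 0 1 : Matrix (n ⊕ m) (n ⊕ m) 𝕜)) =
      (-c) • fromBlocks ((A - 1)⁻¹ * (1 + A)) (c • ((A - 1)⁻¹ * B)) 1 0 := by
  have hAS := mul_inv_one_sub hA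
  have hSA := inv_one_sub_mul hA
  rw [inv_sub_one hA]
  set S := (1 - A)⁻¹
  simp only [fromBlocks_multiply, fromBlocks_smul, ← Matrix.mul_assoc, Matrix.mul_smul, hAS,
    Matrix.neg_mul, Matrix.mul_add, hSA, Matrix.mul_zero, Matrix.sub_mul, Matrix.one_mul,
    Matrix.mul_one, add_zero]
  rw [fromBlocks_inj]
  refine ⟨?_, ?_, ?_, ?_⟩
  · module
  · linear_combination (norm := module) -(hc • (S * B))
  · module
  · module

theorem cayley_conjTranspose_mul_fromBlocks_antidiag_mul [Field 𝕜] [StarRing 𝕜] [CharZero 𝕜]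
    [Fintype n] [DecidableEq n] [Fintype m] [DecidableEq m] {A : Matrix n n 𝕜}
    (hA : IsUnit (1 - A)) (B : Matrix n m 𝕜) (X : Matrix n n 𝕜) {c : 𝕜} (hc : c * c = 2)
    (hc_star : star c = c) :
    (fromBlocks A B (1 : Matrix n n 𝕜) 0 *
          (fromBlocks (c • (1 - A)⁻¹) ((1 - A)⁻¹ * B) 0 1 : Matrix (n ⊕ m) (n ⊕ m) 𝕜))ᴴ *
        fromBlocks 0 X X 0 *
        (fromBlocks A B (1 : Matrix n n 𝕜) 0 *
          (fromBlocks (c • (1 - A)⁻¹) ((1 - A)⁻¹ * B) 0 1 : Matrix (n ⊕ m) (n ⊕ m) 𝕜)) =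
      (fromBlocks ((A - 1)⁻¹ * (1 + A)) (c • ((A - 1)⁻¹ * B)) (1 : Matrix n n 𝕜) 0)ᴴ *
        fromBlocks X 0 0 (-X) *
        fromBlocks ((A - 1)⁻¹ * (1 + A)) (c • ((A - 1)⁻¹ * B)) (1 : Matrix n n 𝕜) 0 := by
  have hHN := hadamard_mul_cayley hA B hc
  set N := fromBlocks A B (1 : Matrix n n 𝕜) 0 *
    (fromBlocks (c • (1 - A)⁻¹) ((1 - A)⁻¹ * B) 0 1 : Matrix (n ⊕ m) (n ⊕ m) 𝕜)
  set M := fromBlocks ((A - 1)⁻¹ * (1 + A)) (c • ((A - 1)⁻¹ * B)) (1 : Matrix n n 𝕜) 0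
  set H : Matrix (n ⊕ n) (n ⊕ n) 𝕜 := fromBlocks 1 1 1 (-1)
  refine smul_right_injective _ (two_ne_zero : (2 : 𝕜) ≠ 0) ?_
  calc (2 : 𝕜) • (Nᴴ * fromBlocks 0 X X 0 * N)
      = Nᴴ * (Hᴴ * fromBlocks X 0 0 (-X) * H) * N := by
        rw [hadamard_conjTranspose_mul_fromBlocks_diag_mul, Matrix.mul_smul, Matrix.smul_mul]
    _ = (H * N)ᴴ * fromBlocks X 0 0 (-X) * (H * N) := by
        simp only [conjTranspose_mul, Matrix.mul_assoc]
    _ = (star (-c) * -c) • (Mᴴ * fromBlocks X 0 0 (-X) * M) := by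
        rw [hHN, conjTranspose_smul, Matrix.smul_mul, Matrix.smul_mul, Matrix.mul_smul, smul_smul,
          mul_comm]
    _ = (2 : 𝕜) • (Mᴴ * fromBlocks X 0 0 (-X) * M) := by
        rw [star_neg, hc_star, neg_mul_neg, hc]

end Matrix

open Matrix

theorem cayley_transform_LMI_congruence_general {n m : ℕ}
    (Ac : Matrix (Fin n) (Fin n) ℂ) (hInv : IsUnit ((1 : Matrix (Fin n) (Fin n) ℂ) - Ac))
    (Bc : Matrix (Fin n) (Fin m) ℂ)
    (Qc : Matrix (Fin n) (Fin n) ℂ)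
    (Cc : Matrix (Fin m) (Fin n) ℂ)
    (Rc : Matrix (Fin m) (Fin m) ℂ)
    (X : Matrix (Fin n) (Fin n) ℂ)
    (Ad : Matrix (Fin n) (Fin n) ℂ) (hAd : Ad = (Ac - 1)⁻¹ * (1 + Ac))
    (Bd : Matrix (Fin n) (Fin m) ℂ)
    (hBd : Bd = ((Real.sqrt 2 : ℝ) : ℂ) • ((Ac - 1)⁻¹ * Bc))
    (Tc : Matrix (Fin n ⊕ Fin m) (Fin n ⊕ Fin m) ℂ)
    (hTc : Tc = fromBlocks (((Real.sqrt 2 : ℝ) : ℂ) • (1 - Ac)⁻¹) ((1 - Ac)⁻¹ * Bc) 0 1)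
    (Kd : Matrix (Fin n ⊕ Fin m) (Fin n ⊕ Fin m) ℂ)
    (hKd : Kd = Tcᴴ * fromBlocks Qc Ccᴴ Cc Rc * Tc) :
    Tcᴴ * (fromBlocks Qc Ccᴴ Cc Rc -
        fromBlocks Acᴴ (1 : Matrix (Fin n) (Fin n) ℂ) Bcᴴ 0 *
          (fromBlocks 0 X X 0 : Matrix (Fin n ⊕ Fin n) (Fin n ⊕ Fin n) ℂ) *
          fromBlocks Ac Bc (1 : Matrix (Fin n) (Fin n) ℂ) 0) * Tc =
      Kd - fromBlocks Adᴴ (1 : Matrix (Fin n) (Fin n) ℂ) Bdᴴ 0 *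
          (fromBlocks X 0 0 (-X) : Matrix (Fin n ⊕ Fin n) (Fin n ⊕ Fin n) ℂ) *
          fromBlocks Ad Bd (1 : Matrix (Fin n) (Fin n) ℂ) 0 := by
  have hc : ((Real.sqrt 2 : ℝ) : ℂ) * ((Real.sqrt 2 : ℝ) : ℂ) = 2 := by
    rw [← Complex.ofReal_mul, Real.mul_self_sqrt zero_le_two, Complex.ofReal_ofNat]
  have hc_star : star ((Real.sqrt 2 : ℝ) : ℂ) = ((Real.sqrt 2 : ℝ) : ℂ) := Complex.conj_ofReal _
  have hR : ∀ (A : Matrix (Fin n) (Fin n) ℂ) (B : Matrix (Fin n) (Fin m) ℂ),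
      fromBlocks Aᴴ (1 : Matrix (Fin n) (Fin n) ℂ) Bᴴ 0 = (fromBlocks A B 1 0)ᴴ := by
    intro A B; simp [fromBlocks_conjTranspose]
  rw [hKd, hR, hR, conjTranspose_mul_sub_conjTranspose_mul_mul, hTc, hAd, hBd,
    cayley_conjTranspose_mul_fromBlocks_antidiag_mul hInv Bc X hc hc_star]

/-- the bilinear (Cayley) transform turns the continuous-time
LMI matrix into the discrete-time LMI matrix by congruence with `T_c`:
`T_cᴴ (K_c − [[A_cᴴ, I],[B_cᴴ, 0]]·[[0, X],[X, 0]]·[[A_c, B_c],[I, 0]]) T_c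
  = K_d − [[A_dᴴ, I],[B_dᴴ, 0]]·[[X, 0],[0, −X]]·[[A_d, B_d],[I, 0]]`
where `K_c = [[Q_c, C_cᴴ],[C_c, R_c]]` and `K_d = T_cᴴ K_c T_c`. -/
theorem cayley_transform_LMI_congruence {n m : ℕ}
    (Ac : Matrix (Fin n) (Fin n) ℂ) (hInv : IsUnit ((1 : Matrix (Fin n) (Fin n) ℂ) - Ac))
    (Bc : Matrix (Fin n) (Fin m) ℂ)
    (Qc : Matrix (Fin n) (Fin n) ℂ) (hQc : Qc.IsHermitian)
    (Cc : Matrix (Fin m) (Fin n) ℂ)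
    (Rc : Matrix (Fin m) (Fin m) ℂ) (hRc : Rc.IsHermitian)
    (X : Matrix (Fin n) (Fin n) ℂ) (hX : X.IsHermitian)
    (Ad : Matrix (Fin n) (Fin n) ℂ) (hAd : Ad = (Ac - 1)⁻¹ * (1 + Ac))
    (Bd : Matrix (Fin n) (Fin m) ℂ)
    (hBd : Bd = ((Real.sqrt 2 : ℝ) : ℂ) • ((Ac - 1)⁻¹ * Bc))
    (Tc : Matrix (Fin n ⊕ Fin m) (Fin n ⊕ Fin m) ℂ)
    (hTc : Tc = fromBlocks (((Real.sqrt 2 : ℝ) : ℂ) • (1 - Ac)⁻¹) ((1 - Ac)⁻¹ * Bc) 0 1)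
    (Kd : Matrix (Fin n ⊕ Fin m) (Fin n ⊕ Fin m) ℂ)
    (hKd : Kd = Tcᴴ * fromBlocks Qc Ccᴴ Cc Rc * Tc) :
    Tcᴴ * (fromBlocks Qc Ccᴴ Cc Rc -
        fromBlocks Acᴴ (1 : Matrix (Fin n) (Fin n) ℂ) Bcᴴ 0 *
          (fromBlocks 0 X X 0 : Matrix (Fin n ⊕ Fin n) (Fin n ⊕ Fin n) ℂ) *
          fromBlocks Ac Bc (1 : Matrix (Fin n) (Fin n) ℂ) 0) * Tc =
      Kd - fromBlocks Adᴴ (1 : Matrix (Fin n) (Fin n) ℂ) Bdᴴ 0 *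
          (fromBlocks X 0 0 (-X) : Matrix (Fin n ⊕ Fin n) (Fin n ⊕ Fin n) ℂ) *
          fromBlocks Ad Bd (1 : Matrix (Fin n) (Fin n) ℂ) 0 :=
  cayley_transform_LMI_congruence_general Ac hInv Bc Qc Cc Rc X Ad hAd Bd hBd Tc hTc Kd hKd
end
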